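/- arXiv:2310.01349 — 2 statements merged into one kernel-verified Lean document; each statement's English description precedes it below -/
import Mathlib

section
/- Let n₀ : ℝ → ℝ be positive, concave and monotone increasing on the interval I' = [z₁ + Δ_d, z₂ + Δ_u], where Δ_d < 0 < Δ_u and z₁ < z₂. Define n_u(z) = n₀(z + Δ_u), n_d(z) = n₀(z + Δ_d), and w(z) = (n_u(z) − n_d(z))/√(n_u(z)). Then w is monotone decreasing on [z₁, z₂]. -/
/-!
For `z ≤ z'` the four points `z + Δd ≤ z + Δu, z' + Δd ≤ z' + Δu` have the two inner points
`z + Δu`, `z' + Δd` between the outer ones with the same sum, so concavity of `n₀` gives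
`n₀ (z' + Δu) - n₀ (z' + Δd) ≤ n₀ (z + Δu) - n₀ (z + Δd)`: the numerator of `w` decreases.
It is nonnegative since `n₀` increases, while the denominator `√(n₀ (z + Δu))` is positive
and increasing, so the quotient decreases.
-/

open Set

section Concave

variable {𝕜 β : Type*} [Field 𝕜] [LinearOrder 𝕜] [IsStrictOrderedRing 𝕜]
  [AddCommGroup β] [PartialOrder β] [IsOrderedAddMonoid β] [Module 𝕜 β]
  {s : Set 𝕜} {f : 𝕜 → β}

/-- Two points `p, q` of `[a, b]` with `p + q = a + b` are the convex combinations
`t • a + u • b` and `u • a + t • b`, so the two concavity inequalities add up. -/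
theorem ConcaveOn.map_add_map_le_of_add_eq (hf : ConcaveOn 𝕜 s f) {a b p q : 𝕜}
    (ha : a ∈ s) (hb : b ∈ s) (hap : a ≤ p) (hpb : p ≤ b) (hsum : p + q = a + b) :
    f a + f b ≤ f p + f q := by
  rcases hap.trans hpb |>.eq_or_lt with rfl | hab
  · obtain rfl : p = a := le_antisymm hpb hap
    obtain rfl : q = p := by linear_combination hsum
    exact le_rfl
  have hba : b - a ≠ 0 := sub_ne_zero.mpr hab.ne'
  set t := (b - p) / (b - a)
  set u := (p - a) / (b - a)
  have ht : 0 ≤ t := div_nonneg (sub_nonneg.mpr hpb) (sub_nonneg.mpr hab.le)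
  have hu : 0 ≤ u := div_nonneg (sub_nonneg.mpr hap) (sub_nonneg.mpr hab.le)
  have htu : t + u = 1 := by simp only [t, u]; field_simp; ring
  have hp : t • a + u • b = p := by simp only [smul_eq_mul, t, u]; field_simp; ring
  have hq : u • a + t • b = q := by
    rw [eq_sub_of_add_eq' hsum]; simp only [smul_eq_mul, t, u]; field_simp; ring
  have hfp := hf.2 ha hb ht hu htu
  have hfq := hf.2 ha hb hu ht (by rwa [add_comm])
  rw [hp] at hfp
  rw [hq] at hfq
  calc f a + f b = (t + u) • f a + (t + u) • f b := by rw [htu, one_smul, one_smul]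
    _ = (t • f a + u • f b) + (u • f a + t • f b) := by simp only [add_smul]; abel
    _ ≤ f p + f q := add_le_add hfp hfq

theorem ConcaveOn.antitoneOn_map_add_sub_map_add (hf : ConcaveOn 𝕜 s f) {t : Set 𝕜} {d u : 𝕜}
    (hdu : d ≤ u) (hd : ∀ z ∈ t, z + d ∈ s) (hu : ∀ z ∈ t, z + u ∈ s) :
    AntitoneOn (fun z => f (z + u) - f (z + d)) t := by
  intro x hx y hy hxy
  have hsum := hf.map_add_map_le_of_add_eq (p := x + u) (q := y + d) (hd x hx) (hu y hy)
    (by linarith) (by linarith) (by ring)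
  simp only [sub_le_sub_iff]
  rwa [add_comm (f (x + d))] at hsum

end Concave

theorem AntitoneOn.div_of_monotoneOn {α 𝕜 : Type*} [Preorder α] [Semifield 𝕜] [LinearOrder 𝕜]
    [IsStrictOrderedRing 𝕜] {s : Set α} {N D : α → 𝕜} (hN : AntitoneOn N s)
    (hD : MonotoneOn D s) (hN₀ : ∀ x ∈ s, 0 ≤ N x) (hD₀ : ∀ x ∈ s, 0 < D x) :
    AntitoneOn (fun x => N x / D x) s :=
  fun _ hx _ hy hxy => div_le_div₀ (hN₀ _ hx) (hN hx hy hxy) (hD₀ _ hx) (hD hx hy hxy)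

theorem w_antitone_of_concave_increasing_general
    (n₀ : ℝ → ℝ) (z₁ z₂ Δd Δu : ℝ)
    (hΔd : Δd < 0) (hΔu : 0 < Δu)
    (hpos : ∀ z ∈ Set.Icc (z₁ + Δd) (z₂ + Δu), 0 < n₀ z)
    (hconc : ConcaveOn ℝ (Set.Icc (z₁ + Δd) (z₂ + Δu)) n₀)
    (hmono : MonotoneOn n₀ (Set.Icc (z₁ + Δd) (z₂ + Δu))) :
    AntitoneOn (fun z => (n₀ (z + Δu) - n₀ (z + Δd)) / Real.sqrt (n₀ (z + Δu)))
      (Set.Icc z₁ z₂) := by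
  have hdu : Δd ≤ Δu := by linarith
  have hd : ∀ z ∈ Icc z₁ z₂, z + Δd ∈ Icc (z₁ + Δd) (z₂ + Δu) :=
    fun z hz => ⟨by linarith [hz.1], by linarith [hz.2]⟩
  have hu : ∀ z ∈ Icc z₁ z₂, z + Δu ∈ Icc (z₁ + Δd) (z₂ + Δu) :=
    fun z hz => ⟨by linarith [hz.1], by linarith [hz.2]⟩
  refine (hconc.antitoneOn_map_add_sub_map_add hdu hd hu).div_of_monotoneOn ?_ ?_ ?_
  · exact fun x hx y hy hxy => Real.sqrt_le_sqrt (hmono (hu x hx) (hu y hy) (by linarith))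
  · exact fun z hz => sub_nonneg.mpr (hmono (hd z hz) (hu z hz) (by linarith))
  · exact fun z hz => Real.sqrt_pos.mpr (hpos _ (hu z hz))

theorem w_antitone_of_concave_increasing
    (n₀ : ℝ → ℝ) (z₁ z₂ Δd Δu : ℝ)
    (hΔd : Δd < 0) (hΔu : 0 < Δu) (hz : z₁ < z₂)
    (hpos : ∀ z ∈ Set.Icc (z₁ + Δd) (z₂ + Δu), 0 < n₀ z)
    (hconc : ConcaveOn ℝ (Set.Icc (z₁ + Δd) (z₂ + Δu)) n₀)
    (hmono : MonotoneOn n₀ (Set.Icc (z₁ + Δd) (z₂ + Δu))) :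
    AntitoneOn (fun z => (n₀ (z + Δu) - n₀ (z + Δd)) / Real.sqrt (n₀ (z + Δu)))
      (Set.Icc z₁ z₂) :=
  w_antitone_of_concave_increasing_general n₀ z₁ z₂ Δd Δu hΔd hΔu hpos hconc hmono
end

section
/- Let n₀ : ℝ → ℝ be positive, concave and monotone decreasing on the interval I' = [z₁ + Δ_d, z₂ + Δ_u], where Δ_d < 0 < Δ_u and z₁ < z₂. Define n_u(z) = n₀(z + Δ_d), n_d(z) = n₀(z + Δ_u), and w(z) = (n_u(z) − n_d(z))/√(n_u(z)). Then w is monotone increasing on [z₁, z₂]. -/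
/-
Proof idea: write `w = (n_u - n_d) / √n_u`. For concave `n₀` the drop `n₀ x - n₀ (x + h)` over an
interval of fixed length `h = Δu - Δd` grows with `x`, so the numerator is increasing; it is
nonnegative because `n₀` is decreasing. The denominator is positive and decreasing, again because
`n₀` is decreasing, so the quotient increases.
-/

theorem ConcaveOn.sub_map_add_le_sub_map_add {𝕜 : Type*} [Field 𝕜] [LinearOrder 𝕜]
    [IsStrictOrderedRing 𝕜] {s : Set 𝕜} {f : 𝕜 → 𝕜} (hf : ConcaveOn 𝕜 s f)
    {x y h : 𝕜} (hx : x ∈ s) (hyh : y + h ∈ s) (hxy : x ≤ y) (hh : 0 < h) :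
    f x - f (x + h) ≤ f y - f (y + h) := by
  have hD : 0 < y + h - x := by linarith
  -- `x + h` and `y` are the convex combinations of `x` and `y + h` with swapped weights `μ`, `1 - μ`.
  set μ : 𝕜 := (y - x) / (y + h - x)
  have hμ0 : 0 ≤ μ := div_nonneg (by linarith) hD.le
  have hμ1 : 0 ≤ 1 - μ := sub_nonneg.2 ((div_le_one hD).2 (by linarith))
  have hxh : μ * x + (1 - μ) * (y + h) = x + h := by
    simp only [μ]; field_simp; ring
  have hy : μ * (y + h) + (1 - μ) * x = y := by
    simp only [μ]; field_simp; ring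
  have h₁ := hf.2 hx hyh hμ0 hμ1 (by ring)
  have h₂ := hf.2 hyh hx hμ0 hμ1 (by ring)
  simp only [smul_eq_mul, hxh, hy] at h₁ h₂
  linear_combination h₁ + h₂

theorem w_monotone_of_concave_decreasing_general
    (n₀ : ℝ → ℝ) (z₁ z₂ Δd Δu : ℝ)
    (hΔd : Δd < 0) (hΔu : 0 < Δu)
    (hpos : ∀ z ∈ Set.Icc (z₁ + Δd) (z₂ + Δu), 0 < n₀ z)
    (hconc : ConcaveOn ℝ (Set.Icc (z₁ + Δd) (z₂ + Δu)) n₀)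
    (hanti : AntitoneOn n₀ (Set.Icc (z₁ + Δd) (z₂ + Δu))) :
    MonotoneOn (fun z => (n₀ (z + Δd) - n₀ (z + Δu)) / Real.sqrt (n₀ (z + Δd)))
      (Set.Icc z₁ z₂) := by
  have shift : ∀ z ∈ Set.Icc z₁ z₂,
      z + Δd ∈ Set.Icc (z₁ + Δd) (z₂ + Δu) ∧ z + Δu ∈ Set.Icc (z₁ + Δd) (z₂ + Δu) :=
    fun z ⟨hz₁, hz₂⟩ => ⟨⟨by linarith, by linarith⟩, ⟨by linarith, by linarith⟩⟩
  intro a ha b hb hab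
  obtain ⟨had, hau⟩ := shift a ha
  obtain ⟨hbd, hbu⟩ := shift b hb
  have numerator_le : n₀ (a + Δd) - n₀ (a + Δu) ≤ n₀ (b + Δd) - n₀ (b + Δu) := by
    have := hconc.sub_map_add_le_sub_map_add (h := Δu - Δd) had
      (by rwa [add_add_sub_cancel]) (by linarith) (by linarith)
    rwa [add_add_sub_cancel, add_add_sub_cancel] at this
  have numerator_nonneg : 0 ≤ n₀ (b + Δd) - n₀ (b + Δu) :=
    sub_nonneg.2 (hanti hbd hbu (by linarith))
  exact div_le_div₀ numerator_nonneg numerator_le (Real.sqrt_pos.2 (hpos _ hbd))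
    (Real.sqrt_le_sqrt (hanti had hbd (by linarith)))

theorem w_monotone_of_concave_decreasing
    (n₀ : ℝ → ℝ) (z₁ z₂ Δd Δu : ℝ)
    (hΔd : Δd < 0) (hΔu : 0 < Δu) (hz : z₁ < z₂)
    (hpos : ∀ z ∈ Set.Icc (z₁ + Δd) (z₂ + Δu), 0 < n₀ z)
    (hconc : ConcaveOn ℝ (Set.Icc (z₁ + Δd) (z₂ + Δu)) n₀)
    (hanti : AntitoneOn n₀ (Set.Icc (z₁ + Δd) (z₂ + Δu))) :
    MonotoneOn (fun z => (n₀ (z + Δd) - n₀ (z + Δu)) / Real.sqrt (n₀ (z + Δd)))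
      (Set.Icc z₁ z₂) :=
  w_monotone_of_concave_decreasing_general n₀ z₁ z₂ Δd Δu hΔd hΔu hpos hconc hanti
end
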